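/- Let n = 2^k·m where k is a positive integer and m > 1 is odd. Then the total chromatic number of the unitary Cayley graph U_n equals φ(n) + 1. -/

import Mathlib

/-!
Every total colouring needs `Δ + 1` colours: a vertex and its incident edges are pairwise
distinct. For the upper bound fix an odd prime `p ∣ n`. Colouring vertex `v` by `2v mod p` and
edge `uv` by `u + v mod p` is proper on `U_n`, because adjacent vertices differ mod `p`. Use these
`p` colours only for the edges whose difference lies in a set `D` of `p - 1` units, one in each
nonzero class mod `p`. As `n` is even, every edge joins an even and an odd vertex; every other
edge gets the colour (odd end) - (even end), a unit outside `D`. Two edges at a vertex with the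
same such colour have the same difference from it, so they coincide. Identifying the residues
mod `p` with `D` and one extra colour, this uses `φ(n) + 1` colours.
-/

/-- A total coloring of a simple graph `G` with colors in `Fin k`: adjacent vertices get
distinct colors, edges sharing an endpoint get distinct colors, and each edge gets a color
distinct from the colors of both its endpoints. -/
def IsTotalColoring {V : Type*} (G : SimpleGraph V) {k : ℕ}
    (cV : V → Fin k) (cE : G.edgeSet → Fin k) : Prop :=
  (∀ u v : V, G.Adj u v → cV u ≠ cV v) ∧
  (∀ e f : G.edgeSet, e ≠ f → (∃ x, x ∈ (e : Sym2 V) ∧ x ∈ (f : Sym2 V)) → cE e ≠ cE f) ∧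
  (∀ (e : G.edgeSet) (v : V), v ∈ (e : Sym2 V) → cE e ≠ cV v)

/-- The total chromatic number: the least `k` admitting a total coloring with `k` colors. -/
noncomputable def totalChromaticNumber {V : Type*} (G : SimpleGraph V) : ℕ :=
  sInf {k | ∃ (cV : V → Fin k) (cE : G.edgeSet → Fin k), IsTotalColoring G cV cE}

/-- The unitary Cayley graph `U n` on `ZMod n`: `u` and `v` are adjacent iff `u ≠ v` and
`u - v` is a unit of `ZMod n` (equivalently, `gcd(u - v, n) = 1`). -/
def unitaryCayleyGraph (n : ℕ) : SimpleGraph (ZMod n) :=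
  SimpleGraph.fromRel (fun u v => IsUnit (u - v))

open Function

section TotalColoring

variable {V : Type*} {G : SimpleGraph V}

theorem IsTotalColoring.card_lt {k : ℕ} {cV : V → Fin k} {cE : G.edgeSet → Fin k}
    (h : IsTotalColoring G cV cE) {v : V} {s : Finset V} (hs : ∀ x ∈ s, G.Adj v x) :
    s.card < k := by
  let c : Option s → Fin k := fun o =>
    o.elim (cV v) fun x => cE ⟨s(v, x), G.mem_edgeSet.2 (hs x x.2)⟩
  have hc : Injective c := by
    rintro (_ | ⟨x, hx⟩) (_ | ⟨y, hy⟩) hxy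
    · rfl
    · exact absurd hxy.symm (h.2.2 _ v (Sym2.mem_mk_left v y))
    · exact absurd hxy (h.2.2 _ v (Sym2.mem_mk_left v x))
    · by_contra hne
      refine h.2.1 _ _ (fun he => hne ?_) ⟨v, Sym2.mem_mk_left v x, Sym2.mem_mk_left v y⟩ hxy
      obtain rfl := Sym2.congr_right.1 (congrArg Subtype.val he)
      rfl
  simpa using Fintype.card_le_of_injective c hc

theorem totalChromaticNumber_eq {K : ℕ}
    (hcol : ∃ (cV : V → Fin K) (cE : G.edgeSet → Fin K), IsTotalColoring G cV cE)
    (hmin : ∀ (k : ℕ) (cV : V → Fin k) (cE : G.edgeSet → Fin k), IsTotalColoring G cV cE → K ≤ k) :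
    totalChromaticNumber G = K := by
  refine le_antisymm (Nat.sInf_le hcol) ?_
  have hmem : totalChromaticNumber G ∈ {k | ∃ (cV : V → Fin k) (cE : G.edgeSet → Fin k),
      IsTotalColoring G cV cE} := Nat.sInf_mem ⟨K, hcol⟩
  obtain ⟨cV, cE, h⟩ := hmem
  exact hmin _ cV cE h

theorem exists_isTotalColoring_of_adj {C : Type*} [Fintype C] (cV : V → C) (f : V → V → C)
    (hsymm : ∀ u v, G.Adj u v → f u v = f v u)
    (hV : ∀ u v, G.Adj u v → cV u ≠ cV v)
    (hE : ∀ x y z, G.Adj x y → G.Adj x z → f x y = f x z → y = z)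
    (hVE : ∀ u v, G.Adj u v → f u v ≠ cV u) :
    ∃ (cV' : V → Fin (Fintype.card C)) (cE' : G.edgeSet → Fin (Fintype.card C)),
      IsTotalColoring G cV' cE' := by
  let e := Fintype.equivFin C
  have hout : ∀ u v, G.Adj u v → f (s(u, v)).out.1 (s(u, v)).out.2 = f u v := by
    intro u v huv
    have hmk : s((s(u, v)).out.1, (s(u, v)).out.2) = s(u, v) := Quot.out_eq _
    rcases Sym2.eq_iff.1 hmk with ⟨h1, h2⟩ | ⟨h1, h2⟩
    · rw [h1, h2]
    · rw [h1, h2, hsymm v u huv.symm]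
  refine ⟨e ∘ cV, fun z => e (f (z : Sym2 V).out.1 (z : Sym2 V).out.2), ?_, ?_, ?_⟩
  · exact fun u v huv => e.injective.ne (hV u v huv)
  · rintro ⟨z, hz⟩ ⟨z', hz'⟩ hne ⟨x, hx, hx'⟩ heq
    obtain ⟨y, rfl⟩ := Sym2.mem_iff_exists.1 hx
    obtain ⟨y', rfl⟩ := Sym2.mem_iff_exists.1 hx'
    rw [SimpleGraph.mem_edgeSet] at hz hz'
    have := hE x y y' hz hz' (by simpa [hout _ _ hz, hout _ _ hz'] using heq)
    subst this
    exact hne rfl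
  · rintro ⟨z, hz⟩ x hx
    obtain ⟨y, rfl⟩ := Sym2.mem_iff_exists.1 hx
    rw [SimpleGraph.mem_edgeSet] at hz
    simpa [hout _ _ hz] using hVE x y hz

end TotalColoring

theorem unitaryCayleyGraph_adj {n : ℕ} {u v : ZMod n} :
    (unitaryCayleyGraph n).Adj u v ↔ u ≠ v ∧ IsUnit (u - v) := by
  rw [unitaryCayleyGraph, SimpleGraph.fromRel_adj, ← neg_sub u v, IsUnit.neg_iff, or_self]

theorem totient_lt_of_isTotalColoring {n k : ℕ} (hn : 1 < n) {cV : ZMod n → Fin k}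
    {cE : (unitaryCayleyGraph n).edgeSet → Fin k}
    (h : IsTotalColoring (unitaryCayleyGraph n) cV cE) :
    n.totient < k := by
  have : Fact (1 < n) := ⟨hn⟩
  have hunits := h.card_lt (v := 0) (s := Finset.univ.map ⟨Units.val, Units.val_injective⟩)
    fun x hx => by
      obtain ⟨u, -, rfl⟩ := Finset.mem_map.1 hx
      exact unitaryCayleyGraph_adj.2 ⟨u.ne_zero.symm, by simp⟩
  simpa [ZMod.card_units_eq_totient] using hunits

section OrientedDiff

variable {A R : Type*} [Ring A] [Ring R] (ρ : A →+* ZMod 2)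

/-- For `u`, `v` of different parity this is the odd one minus the even one, so it is symmetric;
for fixed `u` it is `± (v - u)` with a sign depending on `u` only. -/
def orientedDiff (u v : A) : A := if ρ u = 0 then v - u else u - v

variable {ρ}

theorem map_orientedDiff_eq_iff (φ : A →+* R) {x y z : A} :
    φ (orientedDiff ρ x y) = φ (orientedDiff ρ x z) ↔ φ y = φ z := by
  unfold orientedDiff
  split_ifs <;> simp

theorem orientedDiff_injective (x : A) : Injective (orientedDiff ρ x) := fun _ _ h =>
  (map_orientedDiff_eq_iff (RingHom.id A)).1 h

theorem isUnit_orientedDiff {u v : A} (h : IsUnit (u - v)) : IsUnit (orientedDiff ρ u v) := by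
  unfold orientedDiff
  split_ifs
  · simpa only [neg_sub] using h.neg
  · exact h

theorem orientedDiff_comm {u v : A} (h : IsUnit (u - v)) :
    orientedDiff ρ u v = orientedDiff ρ v u := by
  have hne : ρ u ≠ ρ v := fun heq => (h.map ρ).ne_zero (by rw [map_sub, heq, sub_self])
  have hparity : ρ u = 0 ↔ ¬ρ v = 0 := by
    revert hne
    generalize ρ u = a
    generalize ρ v = b
    decide +revert
  unfold orientedDiff
  by_cases hv : ρ v = 0 <;> simp [hparity, hv]

end OrientedDiff

section Coloring

variable {A R : Type*} [Ring A] [Ring R] (ρ : A →+* ZMod 2) (π : A →+* R) (τ : R → Option Aˣ)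

def vertexColor (v : A) : Option Aˣ := τ (π (2 * v))

open Classical in
/-- Intended for an injective `τ` onto `none` and one unit in each nonzero class of `R`
(`ZMod.exists_injective_lift_option_units`). -/
noncomputable def edgeColor (u v : A) : Option Aˣ :=
  if h : IsUnit (orientedDiff ρ u v) then
    if some h.unit ∈ Set.range τ then τ (π (u + v)) else some h.unit
  else none

variable {ρ π τ}

theorem edgeColor_comm {u v : A} (h : IsUnit (u - v)) :
    edgeColor ρ π τ u v = edgeColor ρ π τ v u := by
  rw [edgeColor, edgeColor, orientedDiff_comm h, add_comm u v]

theorem edgeColor_cases {u v : A} (h : IsUnit (u - v)) :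
    ∃ s : Aˣ, (s : A) = orientedDiff ρ u v ∧
      (some s ∈ Set.range τ ∧ edgeColor ρ π τ u v = τ (π (u + v)) ∨
        some s ∉ Set.range τ ∧ edgeColor ρ π τ u v = some s) := by
  have hu := isUnit_orientedDiff (ρ := ρ) h
  refine ⟨hu.unit, hu.unit_spec, ?_⟩
  unfold edgeColor
  rw [dif_pos hu]
  split_ifs with hs
  · exact Or.inl ⟨hs, rfl⟩
  · exact Or.inr ⟨hs, rfl⟩

variable (hτ : Injective τ)
include hτ

theorem vertexColor_ne [Nontrivial R] (h2 : IsUnit (2 : R)) {u v : A} (h : IsUnit (u - v)) :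
    vertexColor π τ u ≠ vertexColor π τ v := by
  refine hτ.ne fun heq => (h2.mul (h.map π)).ne_zero ?_
  rw [← map_ofNat π 2, ← map_mul, mul_sub, map_sub, heq, sub_self]

theorem edgeColor_ne_vertexColor [Nontrivial R] {u v : A} (h : IsUnit (u - v)) :
    edgeColor ρ π τ u v ≠ vertexColor π τ u := by
  obtain ⟨s, -, ⟨-, he⟩ | ⟨hs, he⟩⟩ := edgeColor_cases (ρ := ρ) (π := π) (τ := τ) h
  · rw [he]
    refine hτ.ne fun heq => (h.map π).ne_zero ?_
    rw [show u - v = 2 * u - (u + v) by noncomm_ring, map_sub, heq, sub_self]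
  · rw [he]
    exact fun heq => hs ⟨_, heq.symm⟩

theorem eq_of_edgeColor_eq (hτπ : ∀ a s, τ a = some s → π s = a) {x y z : A}
    (hy : IsUnit (x - y)) (hz : IsUnit (x - z)) (he : edgeColor ρ π τ x y = edgeColor ρ π τ x z) :
    y = z := by
  obtain ⟨s, hs, ⟨⟨a, ha⟩, hey⟩ | ⟨hsτ, hey⟩⟩ := edgeColor_cases (ρ := ρ) (π := π) (τ := τ) hy <;>
    obtain ⟨t, ht, ⟨⟨b, hb⟩, hez⟩ | ⟨htτ, hez⟩⟩ := edgeColor_cases (ρ := ρ) (π := π) (τ := τ) hz <;>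
    rw [hey, hez] at he
  · have hyz : π y = π z := by simpa using hτ he
    have hab : a = b := by
      rw [← hτπ a s ha, ← hτπ b t hb, hs, ht, map_orientedDiff_eq_iff]
      exact hyz
    subst hab
    refine orientedDiff_injective (ρ := ρ) x ?_
    rw [← hs, ← ht, Option.some_injective _ (ha.symm.trans hb)]
  · exact absurd ⟨_, he⟩ htτ
  · exact absurd ⟨_, he.symm⟩ hsτ
  · exact orientedDiff_injective (ρ := ρ) x (by rw [← hs, ← ht, Option.some_injective _ he])

end Coloring

theorem ZMod.exists_injective_lift_option_units {n p : ℕ} [NeZero n] [Fact p.Prime]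
    (hpn : p ∣ n) :
    ∃ τ : ZMod p → Option (ZMod n)ˣ,
      Injective τ ∧ ∀ a s, τ a = some s → ZMod.castHom hpn (ZMod p) s = a := by
  obtain ⟨σ, hσ⟩ := (ZMod.unitsMap_surjective hpn).hasRightInverse
  let τ : ZMod p → Option (ZMod n)ˣ := fun a =>
    if h : a = 0 then none else some (σ (Units.mk0 a h))
  have hτ : ∀ a s, τ a = some s → ZMod.castHom hpn (ZMod p) s = a := by
    intro a s hs
    by_cases ha : a = 0
    · simp [τ, ha] at hs
    · simp only [τ, dif_neg ha, Option.some_inj] at hs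
      rw [← hs]
      exact congrArg Units.val (hσ (Units.mk0 a ha))
  have hτ0 : ∀ a, τ a = none → a = 0 := fun a h => by
    by_contra ha
    simp [τ, ha] at h
  refine ⟨τ, fun a b hab => ?_, hτ⟩
  cases hτa : τ a with
  | none => rw [hτ0 a hτa, hτ0 b (hab ▸ hτa)]
  | some s => rw [← hτ a s hτa, ← hτ b s (hab ▸ hτa)]

theorem exists_isTotalColoring_unitaryCayleyGraph {n p : ℕ} [NeZero n] (hp : p.Prime)
    (hp2 : p ≠ 2) (hpn : p ∣ n) (h2n : 2 ∣ n) :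
    ∃ (cV : ZMod n → Fin (n.totient + 1))
      (cE : (unitaryCayleyGraph n).edgeSet → Fin (n.totient + 1)),
      IsTotalColoring (unitaryCayleyGraph n) cV cE := by
  have : Fact p.Prime := ⟨hp⟩
  obtain ⟨τ, hτ, hτπ⟩ := ZMod.exists_injective_lift_option_units hpn
  set π := ZMod.castHom hpn (ZMod p)
  set ρ := ZMod.castHom h2n (ZMod 2)
  have h2 : IsUnit (2 : ZMod p) := (Ring.two_ne_zero (by rwa [ZMod.ringChar_zmod_n])).isUnit
  have hunit : ∀ {u v}, (unitaryCayleyGraph n).Adj u v → IsUnit (u - v) := fun h =>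
    (unitaryCayleyGraph_adj.1 h).2
  have := exists_isTotalColoring_of_adj (G := unitaryCayleyGraph n) (vertexColor π τ)
    (edgeColor ρ π τ) (fun u v h => edgeColor_comm (hunit h))
    (fun u v h => vertexColor_ne hτ h2 (hunit h))
    (fun x y z hy hz => eq_of_edgeColor_eq hτ hτπ (hunit hy) (hunit hz))
    (fun u v h => edgeColor_ne_vertexColor hτ (hunit h))
  rwa [Fintype.card_option, ZMod.card_units_eq_totient] at this

theorem totalChromaticNumber_unitaryCayleyGraph_two_pow_mul_odd
    (k m : ℕ) (hk : 0 < k) (hm : 1 < m) (hmodd : Odd m) :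
    totalChromaticNumber (unitaryCayleyGraph (2 ^ k * m)) =
      Nat.totient (2 ^ k * m) + 1 := by
  have hp : m.minFac.Prime := Nat.minFac_prime hm.ne'
  have hp2 : m.minFac ≠ 2 := fun h =>
    Nat.not_even_iff_odd.2 hmodd (even_iff_two_dvd.2 (h ▸ m.minFac_dvd))
  have hpn : m.minFac ∣ 2 ^ k * m := m.minFac_dvd.mul_left _
  have h2n : 2 ∣ 2 ^ k * m := (dvd_pow_self 2 hk.ne').mul_right m
  have hn : 1 < 2 ^ k * m := one_lt_mul Nat.one_le_two_pow hm
  have : NeZero (2 ^ k * m) := ⟨by omega⟩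
  exact totalChromaticNumber_eq (exists_isTotalColoring_unitaryCayleyGraph hp hp2 hpn h2n)
    fun _ _ _ h => totient_lt_of_isTotalColoring hn h
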